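/- Let S = ⟨r₁,…,r_k⟩, d = gcd(r₁,…,r_k), n > r_k² with gcd(n,d)=1, dn ∈ S, and M_n = ⟨n, n+r₁,…,n+r_k⟩. If i ∈ Ap(S; dn) and a = i + m_S(i)·n, then for every ℓ > m_S(i), the element a has no factorization of length ℓ in M_n (equivalently a − ℓn ∉ S). -/

import Mathlib

/-!
If `a = i + m_S(i)·n` had the form `ℓn + b` with `b ∈ S` and `ℓ > m_S(i)`, then
`i = tn + b` with `t = ℓ - m_S(i) > 0`. The gcd `d` of `S` divides `i` and `b`, hence `tn`,
hence `t` since `gcd(n, d) = 1`. So `i - dn = (t/d - 1)·dn + b ∈ S`, contradicting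
`i ∈ Ap(S; dn)`. A factorization of length `ℓ` in `M_n` gives such a `b`, namely the
`S`-part of the factorization.
-/

open scoped Classical

/-- Membership in the additive submonoid of `ℕ` generated by `r 0, …, r (k-1)`. -/
def memGen {k : ℕ} (r : Fin k → ℕ) (a : ℕ) : Prop :=
  ∃ z : Fin k → ℕ, a = ∑ i, z i * r i

/-- The Apéry set `Ap(S; x) = {m ∈ S : m - x ∉ S}` (subtraction in `ℤ`,
encoded by the guard `x ≤ m`). -/
def aperySet {k : ℕ} (r : Fin k → ℕ) (x : ℕ) : Set ℕ :=
  {m | memGen r m ∧ ¬(x ≤ m ∧ memGen r (m - x))}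

/-- The set of factorization lengths of `a` in the monoid generated by `r`. -/
def lenSet {k : ℕ} (r : Fin k → ℕ) (a : ℕ) : Set ℕ :=
  {ℓ | ∃ z : Fin k → ℕ, a = ∑ i, z i * r i ∧ ℓ = ∑ i, z i}

/-- The minimum factorization length of `a` in the monoid generated by `r`. -/
noncomputable def minLen {k : ℕ} (r : Fin k → ℕ) (a : ℕ) : ℕ :=
  sInf (lenSet r a)

/-- The generators `n, n + r 0, …, n + r (k-1)` of the shifted monoid `M_n`. -/
def shiftGen {k : ℕ} (n : ℕ) (r : Fin k → ℕ) : Fin (k + 1) → ℕ :=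
  Fin.cons n (fun i => n + r i)

/-- The genus: the number of gaps of the monoid generated by `r`. -/
noncomputable def genus {k : ℕ} (r : Fin k → ℕ) : ℕ :=
  Set.ncard {m : ℕ | ¬ memGen r m}

/-- The Frobenius number: the largest gap of the monoid generated by `r`. -/
noncomputable def frob {k : ℕ} (r : Fin k → ℕ) : ℕ :=
  sSup {m : ℕ | ¬ memGen r m}

/-- The set of pseudo-Frobenius numbers of the monoid generated by `r`. -/
def pseudoFrob {k : ℕ} (r : Fin k → ℕ) : Set ℕ :=
  {m | ¬ memGen r m ∧ ∀ x : ℕ, memGen r x → 0 < x → memGen r (m + x)}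

section MemGen

variable {k : ℕ} {r : Fin k → ℕ}

lemma memGen_add {a b : ℕ} (ha : memGen r a) (hb : memGen r b) : memGen r (a + b) := by
  obtain ⟨z, rfl⟩ := ha
  obtain ⟨w, rfl⟩ := hb
  exact ⟨z + w, by simp only [Pi.add_apply, add_mul, Finset.sum_add_distrib]⟩

lemma memGen_mul (q : ℕ) {a : ℕ} (ha : memGen r a) : memGen r (q * a) := by
  obtain ⟨z, rfl⟩ := ha
  exact ⟨q • z, by simp only [Finset.mul_sum, Pi.smul_apply, smul_eq_mul, mul_assoc]⟩

lemma gcd_dvd_of_memGen {a : ℕ} (ha : memGen r a) : Finset.univ.gcd r ∣ a := by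
  obtain ⟨z, rfl⟩ := ha
  exact Finset.dvd_sum fun j _ => (Finset.gcd_dvd (Finset.mem_univ j)).mul_left _

lemma mul_add_ne_of_mem_aperySet {x i q b : ℕ} (hx : memGen r x) (hi : i ∈ aperySet r x)
    (hq : q ≠ 0) (hb : memGen r b) : i ≠ q * x + b := by
  rintro rfl
  obtain ⟨p, rfl⟩ := Nat.exists_eq_succ_of_ne_zero hq
  refine hi.2 ⟨by nlinarith, ?_⟩
  have hsub : (p + 1) * x + b - x = p * x + b := by rw [add_mul, one_mul]; omega
  rw [Nat.succ_eq_add_one, hsub]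
  exact memGen_add (memGen_mul p hx) hb

lemma mul_add_ne_of_mem_aperySet_gcd_mul {n i t b : ℕ}
    (hgcd : Nat.gcd n (Finset.univ.gcd r) = 1) (hdn : memGen r (Finset.univ.gcd r * n))
    (hi : i ∈ aperySet r (Finset.univ.gcd r * n)) (ht : t ≠ 0) (hb : memGen r b) :
    i ≠ t * n + b := by
  set d := Finset.univ.gcd r
  intro hit
  have hd_tn : d ∣ t * n :=
    (Nat.dvd_add_left (gcd_dvd_of_memGen hb)).mp (hit ▸ gcd_dvd_of_memGen hi.1)
  obtain ⟨q, rfl⟩ := (Nat.coprime_comm.mp hgcd).dvd_of_dvd_mul_right hd_tn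
  refine mul_add_ne_of_mem_aperySet hdn hi (right_ne_zero_of_mul ht) hb ?_
  rw [hit, mul_comm d q, mul_assoc]

end MemGen

lemma sum_mul_shiftGen {k : ℕ} (n : ℕ) (r : Fin k → ℕ) (z : Fin (k + 1) → ℕ) :
    ∑ j, z j * shiftGen n r j = (∑ j, z j) * n + ∑ j, z j.succ * r j := by
  simp only [Fin.sum_univ_succ, shiftGen, Fin.cons_zero, Fin.cons_succ, mul_add,
    Finset.sum_add_distrib, add_mul, Finset.sum_mul]
  ring

theorem no_long_factorizations_general {k : ℕ} (r : Fin (k + 1) → ℕ)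
    (d : ℕ) (hd : d = Finset.univ.gcd r)
    (n : ℕ)
    (hgcd : Nat.gcd n d = 1) (hdn : memGen r (d * n))
    (i : ℕ) (hi : i ∈ aperySet r (d * n))
    (ℓ : ℕ) (hℓ : ℓ > minLen r i) :
    (¬ ∃ z : Fin (k + 2) → ℕ,
        i + minLen r i * n = ∑ j, z j * shiftGen n r j ∧ (∑ j, z j) = ℓ) ∧
      ¬ ∃ b : ℕ, memGen r b ∧ i + minLen r i * n = ℓ * n + b := by
  subst hd
  have not_mem_sub : ¬ ∃ b : ℕ, memGen r b ∧ i + minLen r i * n = ℓ * n + b := by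
    rintro ⟨b, hb, hab⟩
    refine mul_add_ne_of_mem_aperySet_gcd_mul hgcd hdn hi (Nat.sub_ne_zero_of_lt hℓ) hb ?_
    have hℓ_eq : ℓ * n = (ℓ - minLen r i) * n + minLen r i * n := by
      rw [← add_mul, Nat.sub_add_cancel hℓ.le]
    omega
  refine ⟨?_, not_mem_sub⟩
  rintro ⟨z, hz, rfl⟩
  exact not_mem_sub ⟨_, ⟨fun j => z j.succ, rfl⟩, hz.trans (sum_mul_shiftGen n r z)⟩

/-- Under `n > r_k²`, `gcd(n,d) = 1`, `dn ∈ S`: if `i ∈ Ap(S; dn)` and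
`a = i + m_S(i)·n`, then for every `ℓ > m_S(i)` the element `a` has no factorization of
length `ℓ` in `M_n`; equivalently `a − ℓn ∉ S` (encoded without truncation as
`¬∃ b ∈ S, a = ℓn + b`). -/
theorem no_long_factorizations {k : ℕ} (r : Fin (k + 1) → ℕ)
    (hmono : StrictMono r) (hpos : 0 < r 0)
    (d : ℕ) (hd : d = Finset.univ.gcd r)
    (n : ℕ) (hn : n > (r (Fin.last k)) ^ 2)
    (hgcd : Nat.gcd n d = 1) (hdn : memGen r (d * n))
    (i : ℕ) (hi : i ∈ aperySet r (d * n))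
    (ℓ : ℕ) (hℓ : ℓ > minLen r i) :
    (¬ ∃ z : Fin (k + 2) → ℕ,
        i + minLen r i * n = ∑ j, z j * shiftGen n r j ∧ (∑ j, z j) = ℓ) ∧
      ¬ ∃ b : ℕ, memGen r b ∧ i + minLen r i * n = ℓ * n + b :=
  no_long_factorizations_general r d hd n hgcd hdn i hi ℓ hℓ
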